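/- Let A be a C*-algebra, let G be a finite group, and let α, β : G → Aut(A) be two actions of G on A. Let 𝓜(A) denote the multiplier algebra of A with canonical *-embedding ι : A → 𝓜(A), and for each g ∈ G let ᾱ_g be a *-automorphism of 𝓜(A) with ᾱ_g(ι(a)) = ι(α_g(a)) for all a ∈ A. Suppose α and β are exterior equivalent: there is a map ω : G → 𝓜(A) such that each ω_g is a unitary (ω_g* ω_g = ω_g ω_g* = 1), ω_{gh} = ω_g ᾱ_g(ω_h) for all g, h ∈ G, and ι(β_g(a)) = ω_g ι(α_g(a)) ω_g* for all g ∈ G and a ∈ A. If α has the Rokhlin property, then β has the Rokhlin property. -/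

import Mathlib

/-!
Given `ε` and `F`, take a positive contraction `e ∈ A` from an approximate unit of `A` such that
every translate `β g e` is an approximate unit for `F`, and an `α`-Rokhlin tower `q` for a smaller
tolerance and a larger finite set. Then `r g = q g * β g e * q g` is a `β`-Rokhlin tower.

Only approximate equivariance uses the exterior equivalence. In `𝓜(A)`,
`β g (q h) * β (g h) e = ω g * α g (q h) * (α g (β h e) * ω g⋆)` with `α g (q h) ≈ q (g h)`.
The unitary `ω g` does not lie in `A`, so `q (g h)` need not commute with it approximately; but
`q (g h)` can be moved past `α g (β h e)` and past `β (g h) e * ω g`, and the latter lies in `A`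
because `A` is an ideal of `𝓜(A)`.
-/

open scoped MultiplierAlgebra

/-- The Rokhlin property for an action of a finite group `G` on a C*-algebra `A`. -/
def RokhlinProperty {G A : Type*} [Group G] [Fintype G] [NonUnitalCStarAlgebra A]
    (α : G → (A ≃⋆ₐ[ℂ] A)) : Prop :=
  ∀ (ε : ℝ), 0 < ε → ∀ (F : Finset A),
    ∃ r : G → A,
      (∀ g, ∃ s, r g = star s * s) ∧
      (∀ g, ‖r g‖ ≤ 1) ∧
      (∀ g h, g ≠ h → r g * r h = 0) ∧
      (∀ g h, ‖α g (r h) - r (g * h)‖ < ε) ∧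
      (∀ a ∈ F, ∀ g, ‖r g * a - a * r g‖ < ε) ∧
      (∀ a ∈ F, ‖(∑ g, r g) * a - a‖ < ε)

lemma Fintype.sum_mul_sum_eq_sum_mul_self {ι R : Type*} [Fintype ι] [NonUnitalNonAssocSemiring R]
    {q : ι → R} (horth : ∀ i j, i ≠ j → q i * q j = 0) :
    (∑ i, q i) * (∑ i, q i) = ∑ i, q i * q i := by
  rw [Fintype.sum_mul_sum]
  exact Finset.sum_congr rfl fun i _ =>
    Finset.sum_eq_single i (fun j _ hji => horth i j hji.symm) (by simp)

section NormEstimates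

variable {R : Type*} [NonUnitalSeminormedRing R]

lemma norm_mul_le_of_norm_le_one_left {x : R} (hx : ‖x‖ ≤ 1) (y : R) : ‖x * y‖ ≤ ‖y‖ :=
  (norm_mul_le x y).trans (mul_le_of_le_one_left (norm_nonneg y) hx)

lemma norm_mul_le_of_norm_le_one_right (x : R) {y : R} (hy : ‖y‖ ≤ 1) : ‖x * y‖ ≤ ‖x‖ :=
  (norm_mul_le x y).trans (mul_le_of_le_one_right (norm_nonneg x) hy)

lemma norm_mul_le_one {x y : R} (hx : ‖x‖ ≤ 1) (hy : ‖y‖ ≤ 1) : ‖x * y‖ ≤ 1 :=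
  (norm_mul_le_of_norm_le_one_left hx y).trans hy

lemma norm_mul_mul_commutator_le {x y z : R} (hx : ‖x‖ ≤ 1) (hy : ‖y‖ ≤ 1) (hz : ‖z‖ ≤ 1)
    (a : R) :
    ‖x * y * z * a - a * (x * y * z)‖ ≤ ‖x * a - a * x‖ + ‖y * a - a * y‖ + ‖z * a - a * z‖ := by
  have hxy := norm_mul_le_one hx hy
  calc ‖x * y * z * a - a * (x * y * z)‖
      = ‖(x * a - a * x) * (y * z) + x * ((y * a - a * y) * z) + x * y * (z * a - a * z)‖ := by
        congr 1; noncomm_ring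
    _ ≤ ‖x * a - a * x‖ + ‖y * a - a * y‖ + ‖z * a - a * z‖ := by
      refine (norm_add₃_le ..).trans (add_le_add_three ?_ ?_ ?_)
      · exact norm_mul_le_of_norm_le_one_right _ (norm_mul_le_one hy hz)
      · exact (norm_mul_le_of_norm_le_one_left hx _).trans
          (norm_mul_le_of_norm_le_one_right _ hz)
      · exact norm_mul_le_of_norm_le_one_left hxy _

lemma norm_mul_mul_mul_sub_mul_mul_le {x y : R} (hx : ‖x‖ ≤ 1) (hy : ‖y‖ ≤ 1) (a : R) :
    ‖x * y * x * a - x * x * a‖ ≤ 2 * ‖x * a - a * x‖ + ‖y * a - a‖ := by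
  calc ‖x * y * x * a - x * x * a‖
      = ‖x * y * (x * a - a * x) + x * ((y * a - a) * x) - x * (x * a - a * x)‖ := by
        congr 1; noncomm_ring
    _ ≤ ‖x * a - a * x‖ + ‖y * a - a‖ + ‖x * a - a * x‖ := by
      refine (norm_sub_le _ _).trans (add_le_add ((norm_add_le _ _).trans (add_le_add ?_ ?_)) ?_)
      · exact norm_mul_le_of_norm_le_one_left (norm_mul_le_one hx hy) _
      · exact (norm_mul_le_of_norm_le_one_left hx _).trans
          (norm_mul_le_of_norm_le_one_right _ hx)
      · exact norm_mul_le_of_norm_le_one_left hx _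
    _ = 2 * ‖x * a - a * x‖ + ‖y * a - a‖ := by ring

lemma norm_mul_self_mul_sub_le (s a : R) : ‖s * s * a - a‖ ≤ (‖s‖ + 1) * ‖s * a - a‖ := by
  calc ‖s * s * a - a‖ = ‖s * (s * a - a) + (s * a - a)‖ := by congr 1; noncomm_ring
    _ ≤ ‖s‖ * ‖s * a - a‖ + ‖s * a - a‖ :=
      (norm_add_le _ _).trans (by gcongr; exact norm_mul_le _ _)
    _ = (‖s‖ + 1) * ‖s * a - a‖ := by ring

lemma norm_sum_mul_mul_mul_sub_lt {ι : Type*} [Fintype ι] {q D : ι → R} {a : R} {δ : ℝ}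
    (hq : ∀ i, ‖q i‖ ≤ 1) (hD : ∀ i, ‖D i‖ ≤ 1) (horth : ∀ i j, i ≠ j → q i * q j = 0) (hqa : ∀ i, ‖q i * a - a * q i‖ < δ)
    (hDa : ∀ i, ‖D i * a - a‖ < δ) (hsum : ‖(∑ i, q i) * a - a‖ < δ) :
    ‖(∑ i, q i * D i * q i) * a - a‖ < (4 * Fintype.card ι + 1) * δ := by
  have hterm : ‖∑ i, (q i * D i * q i * a - q i * q i * a)‖ ≤ Fintype.card ι * (3 * δ) := by
    refine (norm_sum_le_of_le (n := fun _ => 3 * δ) _ fun i _ => ?_).trans_eq ?_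
    · linarith [norm_mul_mul_mul_sub_mul_mul_le (hq i) (hD i) a, hqa i, hDa i]
    · rw [Finset.sum_const, Finset.card_univ, nsmul_eq_mul]
  have hnorm : ‖∑ i, q i‖ ≤ Fintype.card ι := by
    refine (norm_sum_le_of_le _ fun i _ => hq i).trans_eq ?_
    rw [Finset.sum_const, Finset.card_univ, nsmul_eq_mul, mul_one]
  have hsq : ‖(∑ i, q i) * (∑ i, q i) * a - a‖ < (Fintype.card ι + 1) * δ :=
    (norm_mul_self_mul_sub_le _ a).trans_lt
      (mul_lt_mul' (by linarith) hsum (norm_nonneg _) (by positivity))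
  have hsplit : (∑ i, q i * D i * q i) * a - a
      = ∑ i, (q i * D i * q i * a - q i * q i * a) + ((∑ i, q i) * (∑ i, q i) * a - a) := by
    rw [Fintype.sum_mul_sum_eq_sum_mul_self horth, Finset.sum_sub_distrib, Finset.sum_mul,
      Finset.sum_mul]
    abel
  rw [hsplit]
  linarith [norm_add_le (∑ i, (q i * D i * q i * a - q i * q i * a))
    ((∑ i, q i) * (∑ i, q i) * a - a)]

end NormEstimates

section CStarEstimates

lemma norm_mul_mul_sub_mul_mul_le {R : Type*} [NonUnitalNormedRing R] [StarRing R] [CStarRing R]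
    {x y d : R} (hx : IsSelfAdjoint x) (hy : IsSelfAdjoint y) (hd : IsSelfAdjoint d)
    (hx1 : ‖x‖ ≤ 1) (hy1 : ‖y‖ ≤ 1) :
    ‖x * d * x - y * d * y‖ ≤ 2 * ‖x * d - y * d‖ := by
  have hstar : star (x * d - y * d) = d * x - d * y := by
    rw [star_sub, star_mul, star_mul, hx.star_eq, hy.star_eq, hd.star_eq]
  calc ‖x * d * x - y * d * y‖ = ‖(x * d - y * d) * x + y * star (x * d - y * d)‖ := by
        rw [hstar]; congr 1; noncomm_ring
    _ ≤ ‖x * d - y * d‖ + ‖x * d - y * d‖ := by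
      refine (norm_add_le _ _).trans (add_le_add ?_ ?_)
      · exact norm_mul_le_of_norm_le_one_right _ hx1
      · exact (norm_mul_le_of_norm_le_one_left hy1 _).trans_eq (norm_star _)
    _ = 2 * ‖x * d - y * d‖ := by ring

lemma norm_unitary_conj_mul_sub_le {M : Type*} [NormedRing M] [StarRing M] [CStarRing M]
    {W X Q D E : M} (hW : W ∈ unitary M) (hE : ‖E‖ ≤ 1) (hWE : W * E = D * W) :
    ‖W * X * star W * D - Q * D‖
      ≤ ‖X - Q‖ + ‖Q * E - E * Q‖ + ‖Q * (D * W) - D * W * Q‖ := by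
  have hWW := Unitary.mul_star_self_of_mem hW
  have hW' := Unitary.star_mem hW
  have hstarD : star W * D = E * star W := by
    calc star W * D = star W * (D * W) * star W := by rw [mul_assoc, mul_assoc, hWW, mul_one]
      _ = E * star W := by rw [← hWE, ← mul_assoc, Unitary.star_mul_self_of_mem hW, one_mul]
  calc ‖W * X * star W * D - Q * D‖
      = ‖W * ((X - Q) * E) * star W + W * (Q * E - E * Q) * star W
          - (Q * (D * W) - D * W * Q) * star W‖ := by
        have hXE : W * X * star W * D = W * X * E * star W := by
          rw [mul_assoc _ (star W), hstarD, ← mul_assoc]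
        have hQD : Q * D = Q * (D * W) * star W := by rw [mul_assoc Q, mul_assoc D, hWW, mul_one]
        have hcomm : W * (Q * E - E * Q) * star W = W * Q * E * star W - D * W * Q * star W := by
          rw [← hWE]; noncomm_ring
        rw [hXE, hQD, hcomm]; congr 1; noncomm_ring
    _ ≤ ‖X - Q‖ + ‖Q * E - E * Q‖ + ‖Q * (D * W) - D * W * Q‖ := by
      refine (norm_sub_le _ _).trans (add_le_add ((norm_add_le _ _).trans (add_le_add ?_ ?_)) ?_)
      · rw [CStarRing.norm_mul_mem_unitary _ hW', CStarRing.norm_mem_unitary_mul _ hW]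
        exact norm_mul_le_of_norm_le_one_right _ hE
      · rw [CStarRing.norm_mul_mem_unitary _ hW', CStarRing.norm_mem_unitary_mul _ hW]
      · rw [CStarRing.norm_mul_mem_unitary _ hW']

end CStarEstimates

namespace DoubleCentralizer

variable {𝕜 A : Type*} [DenselyNormedField 𝕜] [NonUnitalNormedRing A] [NormedSpace 𝕜 A]
  [SMulCommClass 𝕜 A A] [IsScalarTower 𝕜 A A]

@[simp, norm_cast]
lemma coe_mul (a b : A) : ((a * b : A) : 𝓜(𝕜, A)) = a * b := by
  ext x : 3 <;> simp [mul_assoc]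

@[simp, norm_cast]
lemma coe_sub (a b : A) : ((a - b : A) : 𝓜(𝕜, A)) = a - b := by
  ext x : 3 <;> simp

variable [StarRing A] [CStarRing A]

lemma norm_coe (a : A) : ‖(a : 𝓜(𝕜, A))‖ = ‖a‖ := by
  rw [← norm_fst, coe_fst, ContinuousLinearMap.opNorm_mul_apply]

/-- `A` is a right ideal of `𝓜(𝕜, A)`. -/
lemma coe_mul_eq_coe_snd (a : A) (m : 𝓜(𝕜, A)) : (a : 𝓜(𝕜, A)) * m = (m.snd a : 𝓜(𝕜, A)) := by
  ext x : 3
  · exact (m.central a x).symm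
  · show m.snd (x * a) = x * m.snd a
    rw [← sub_eq_zero, ← CStarRing.mul_star_self_eq_zero_iff, sub_mul, m.central,
      mul_assoc x (m.snd a), m.central, mul_assoc, sub_self]

end DoubleCentralizer

section ApproximateUnit

variable {G A : Type*} [Finite G] [NonUnitalCStarAlgebra A]

lemma exists_approxUnit_map (β : G → A ≃⋆ₐ[ℂ] A) (F : Finset A) {δ : ℝ} (hδ : 0 < δ) :
    ∃ e : A, (∃ s, e = star s * s) ∧ ‖e‖ ≤ 1 ∧
      ∀ g, ∀ a ∈ F, ‖β g e * a - a‖ < δ ∧ ‖a * β g e - a‖ < δ := by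
  let _ := CStarAlgebra.spectralOrder A
  have _ := CStarAlgebra.spectralOrderedRing A
  have hl := CStarAlgebra.increasingApproximateUnit A
  have _ := hl.neBot
  have happrox : ∀ᶠ e in CStarAlgebra.approximateUnit A,
      ∀ g, ∀ a ∈ F, ‖β g e * a - a‖ < δ ∧ ‖a * β g e - a‖ < δ := by
    refine Filter.eventually_all.2 fun g => (Filter.eventually_all_finset F).2 fun a _ => ?_
    have hβ : ∀ x : A, ‖β g x - a‖ = ‖x - (β g).symm a‖ := fun x => by
      rw [← NonUnitalStarAlgHom.norm_map (β g) (β g).injective (x - (β g).symm a), map_sub,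
        StarAlgEquiv.apply_symm_apply]
    have hleft := (hl.tendsto_mul_right ((β g).symm a)).eventually (Metric.ball_mem_nhds _ hδ)
    have hright := (hl.tendsto_mul_left ((β g).symm a)).eventually (Metric.ball_mem_nhds _ hδ)
    filter_upwards [hleft, hright] with e hel her
    rw [dist_eq_norm] at hel her
    rw [← StarAlgEquiv.apply_symm_apply (β g) a, ← map_mul, ← map_mul,
      StarAlgEquiv.apply_symm_apply, hβ, hβ]
    exact ⟨hel, her⟩
  obtain ⟨e, ⟨he0, he1⟩, he⟩ := ((hl.eventually_nonneg.and hl.eventually_norm).and happrox).exists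
  exact ⟨e, CStarAlgebra.nonneg_iff_eq_star_mul_self.1 he0, he1, he⟩

end ApproximateUnit

structure IsRokhlinTower {G A : Type*} [Group G] [Fintype G] [NonUnitalCStarAlgebra A]
    (α : G → (A ≃⋆ₐ[ℂ] A)) (ε : ℝ) (F : Finset A) (r : G → A) : Prop where
  exists_eq_star_mul_self : ∀ g, ∃ s, r g = star s * s
  norm_le_one : ∀ g, ‖r g‖ ≤ 1
  mul_eq_zero : ∀ g h, g ≠ h → r g * r h = 0
  norm_map_sub_lt : ∀ g h, ‖α g (r h) - r (g * h)‖ < ε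
  norm_commutator_lt : ∀ a ∈ F, ∀ g, ‖r g * a - a * r g‖ < ε
  norm_sum_mul_sub_lt : ∀ a ∈ F, ‖(∑ g, r g) * a - a‖ < ε

lemma rokhlinProperty_iff {G A : Type*} [Group G] [Fintype G] [NonUnitalCStarAlgebra A]
    {α : G → (A ≃⋆ₐ[ℂ] A)} :
    RokhlinProperty α ↔ ∀ ε, 0 < ε → ∀ F, ∃ r, IsRokhlinTower α ε F r := by
  refine forall₂_congr fun ε _ => forall_congr' fun F => exists_congr fun r => ?_
  exact ⟨fun ⟨h₁, h₂, h₃, h₄, h₅, h₆⟩ => ⟨h₁, h₂, h₃, h₄, h₅, h₆⟩,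
    fun ⟨h₁, h₂, h₃, h₄, h₅, h₆⟩ => ⟨h₁, h₂, h₃, h₄, h₅, h₆⟩⟩

namespace IsRokhlinTower

variable {G A : Type*} [Group G] [Fintype G] [NonUnitalCStarAlgebra A]
  {α : G → (A ≃⋆ₐ[ℂ] A)} {ε : ℝ} {F : Finset A} {r : G → A}

lemma isSelfAdjoint (hr : IsRokhlinTower α ε F r) (g : G) : IsSelfAdjoint (r g) := by
  obtain ⟨s, hs⟩ := hr.exists_eq_star_mul_self g
  exact hs ▸ IsSelfAdjoint.star_mul_self s

lemma pos (hr : IsRokhlinTower α ε F r) : 0 < ε :=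
  (norm_nonneg _).trans_lt (hr.norm_map_sub_lt 1 1)

end IsRokhlinTower

section ExteriorEquivalence

variable {G A : Type*} [NonUnitalCStarAlgebra A]
  {α β : G → (A ≃⋆ₐ[ℂ] A)} {ω : G → 𝓜(ℂ, A)}

lemma coe_map_mul_eq_mul_coe_map (hunitary : ∀ g, ω g ∈ unitary 𝓜(ℂ, A))
    (hext : ∀ g a, (β g a : 𝓜(ℂ, A)) = ω g * (α g a : 𝓜(ℂ, A)) * star (ω g))
    (g : G) (c : A) : (β g c : 𝓜(ℂ, A)) * ω g = ω g * (α g c : 𝓜(ℂ, A)) := by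
  rw [hext, mul_assoc, Unitary.star_mul_self_of_mem (hunitary g), mul_one]

lemma norm_map_mul_map_sub_le (hunitary : ∀ g, ω g ∈ unitary 𝓜(ℂ, A))
    (hext : ∀ g a, (β g a : 𝓜(ℂ, A)) = ω g * (α g a : 𝓜(ℂ, A)) * star (ω g))
    (g : G) (x y : A) {c : A} (hc : ‖c‖ ≤ 1) :
    ‖β g x * β g c - y * β g c‖ ≤ ‖α g x - y‖ + ‖y * α g c - α g c * y‖
      + ‖y * (ω g).snd (β g c) - (ω g).snd (β g c) * y‖ := by
  have hι : ∀ a b : A, ‖a - b‖ = ‖(a : 𝓜(ℂ, A)) - b‖ := fun a b => by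
    rw [← DoubleCentralizer.coe_sub, DoubleCentralizer.norm_coe]
  have hαc : ‖(α g c : 𝓜(ℂ, A))‖ ≤ 1 := by
    rwa [DoubleCentralizer.norm_coe, NonUnitalStarAlgHom.norm_map (α g) (α g).injective]
  calc ‖β g x * β g c - y * β g c‖
      = ‖ω g * (α g x : 𝓜(ℂ, A)) * star (ω g) * (β g c : 𝓜(ℂ, A)) - y * (β g c : 𝓜(ℂ, A))‖ := by
        rw [hι, DoubleCentralizer.coe_mul, DoubleCentralizer.coe_mul, hext]
    _ ≤ _ := norm_unitary_conj_mul_sub_le (hunitary g) hαc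
        (coe_map_mul_eq_mul_coe_map hunitary hext g c).symm
    _ = _ := by
      rw [DoubleCentralizer.coe_mul_eq_coe_snd (β g c) (ω g)]
      simp only [← DoubleCentralizer.coe_mul, ← hι]

variable [Group G] [Fintype G]

lemma IsRokhlinTower.norm_map_mul_map_mul_sub_lt (hβ : ∀ g h a, β (g * h) a = β g (β h a))
    (hunitary : ∀ g, ω g ∈ unitary 𝓜(ℂ, A))
    (hext : ∀ g a, (β g a : 𝓜(ℂ, A)) = ω g * (α g a : 𝓜(ℂ, A)) * star (ω g))
    {δ : ℝ} {F : Finset A} {q : G → A} (hq : IsRokhlinTower α δ F q) {e : A}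
    (he : IsSelfAdjoint e) (he1 : ‖e‖ ≤ 1) (hE : ∀ g h, α g (β h e) ∈ F)
    (hφ : ∀ g h, (ω g).snd (β (g * h) e) ∈ F) (g h : G) :
    ‖β g (q h * β h e * q h) - q (g * h) * β (g * h) e * q (g * h)‖ < 6 * δ := by
  have hβe : β g (β h e) = β (g * h) e := (hβ g h e).symm
  have hnorm : ∀ k x, ‖β k x‖ = ‖x‖ := fun k => NonUnitalStarAlgHom.norm_map (β k) (β k).injective
  have hequiv := norm_map_mul_map_sub_le hunitary hext g (q h) (q (g * h))
    ((hnorm h e).trans_le he1)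
  rw [hβe] at hequiv
  rw [map_mul, map_mul, hβe]
  calc ‖β g (q h) * β (g * h) e * β g (q h) - q (g * h) * β (g * h) e * q (g * h)‖
      ≤ 2 * ‖β g (q h) * β (g * h) e - q (g * h) * β (g * h) e‖ :=
        norm_mul_mul_sub_mul_mul_le ((hq.isSelfAdjoint h).map (β g)) (hq.isSelfAdjoint _)
          (he.map (β _)) ((hnorm g _).trans_le (hq.norm_le_one h)) (hq.norm_le_one _)
    _ < 6 * δ := by
      linarith [hq.norm_map_sub_lt g h, hq.norm_commutator_lt _ (hE g h) (g * h),
        hq.norm_commutator_lt _ (hφ g h) (g * h)]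

lemma IsRokhlinTower.mul_map_mul (hβ : ∀ g h a, β (g * h) a = β g (β h a))
    (hunitary : ∀ g, ω g ∈ unitary 𝓜(ℂ, A))
    (hext : ∀ g a, (β g a : 𝓜(ℂ, A)) = ω g * (α g a : 𝓜(ℂ, A)) * star (ω g))
    {δ : ℝ} {F F' : Finset A} {q : G → A} (hq : IsRokhlinTower α δ F' q) {e : A}
    (he : ∃ s, e = star s * s) (he1 : ‖e‖ ≤ 1)
    (heF : ∀ g, ∀ a ∈ F, ‖β g e * a - a‖ < δ ∧ ‖a * β g e - a‖ < δ) (hFF' : F ⊆ F')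
    (hE : ∀ g h, α g (β h e) ∈ F') (hφ : ∀ g h, (ω g).snd (β (g * h) e) ∈ F') :
    IsRokhlinTower β ((4 * Fintype.card G + 6) * δ) F (fun g => q g * β g e * q g) := by
  obtain ⟨s, rfl⟩ := he
  have hδ := hq.pos
  have hK : 6 * δ ≤ (4 * Fintype.card G + 6) * δ := by
    nlinarith [Nat.cast_nonneg (α := ℝ) (Fintype.card G)]
  have hβ1 : ∀ g, ‖β g (star s * s)‖ ≤ 1 := fun g =>
    (NonUnitalStarAlgHom.norm_map (β g) (β g).injective _).trans_le he1
  refine ⟨fun g => ⟨β g s * q g, ?_⟩, fun g => ?_, fun g h hgh => ?_, fun g h => ?_,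
    fun a ha g => ?_, fun a ha => ?_⟩
  · rw [star_mul, (hq.isSelfAdjoint g).star_eq, ← map_star, map_mul, map_star]
    noncomm_ring
  · exact norm_mul_le_one (norm_mul_le_one (hq.norm_le_one g) (hβ1 g)) (hq.norm_le_one g)
  · calc q g * β g (star s * s) * q g * (q h * β h (star s * s) * q h)
        = q g * β g (star s * s) * (q g * q h) * (β h (star s * s) * q h) := by noncomm_ring
      _ = 0 := by rw [hq.mul_eq_zero g h hgh, mul_zero, zero_mul]
  · have := hq.norm_map_mul_map_mul_sub_lt hβ hunitary hext (.star_mul_self s) he1 hE hφ g h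
    linarith
  · have hqa := hq.norm_commutator_lt a (hFF' ha) g
    have hDa : ‖β g (star s * s) * a - a * β g (star s * s)‖ < 2 * δ := by
      rw [← sub_sub_sub_cancel_right _ _ a]
      linarith [norm_sub_le (β g (star s * s) * a - a) (a * β g (star s * s) - a), heF g a ha]
    linarith [norm_mul_mul_commutator_le (hq.norm_le_one g) (hβ1 g) (hq.norm_le_one g) a]
  · refine (norm_sum_mul_mul_mul_sub_lt hq.norm_le_one hβ1 hq.mul_eq_zero
      (hq.norm_commutator_lt a (hFF' ha)) (fun g => (heF g a ha).1)
      (hq.norm_sum_mul_sub_lt a (hFF' ha))).trans_le ?_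
    gcongr
    norm_num

end ExteriorEquivalence

theorem stmt10_general {G A : Type*} [Group G] [Fintype G] [NonUnitalCStarAlgebra A]
    (α : G → (A ≃⋆ₐ[ℂ] A))
    (β : G → (A ≃⋆ₐ[ℂ] A)) (hβ : ∀ g h a, β (g * h) a = β g (β h a))
    (ω : G → 𝓜(ℂ, A))
    (hunitary : ∀ g, star (ω g) * ω g = 1 ∧ ω g * star (ω g) = 1)
    (hext : ∀ (g : G) (a : A),
      DoubleCentralizer.coe ℂ (β g a)
        = ω g * DoubleCentralizer.coe ℂ (α g a) * star (ω g))
    (hRokhlin : RokhlinProperty α) :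
    RokhlinProperty β := by
  classical
  rw [rokhlinProperty_iff] at hRokhlin ⊢
  intro ε hε F
  have hK : (0 : ℝ) < 4 * Fintype.card G + 6 := by positivity
  obtain ⟨e, he, he1, heF⟩ := exists_approxUnit_map β F (div_pos hε hK)
  let F' := F ∪ Finset.univ.image (fun p : G × G => α p.1 (β p.2 e)) ∪
    Finset.univ.image (fun p : G × G => (ω p.1).snd (β (p.1 * p.2) e))
  obtain ⟨q, hq⟩ := hRokhlin _ (div_pos hε hK) F'
  refine ⟨_, mul_div_cancel₀ ε hK.ne' ▸ hq.mul_map_mul hβ hunitary hext he he1 heF ?_ ?_ ?_⟩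
  · intro a ha; simp [F', ha]
  · intro g h; simp [F']
  · intro g h; simp [F']

/-- The Rokhlin property is invariant under exterior equivalence of actions.
Here `𝓜(ℂ, A)` is the multiplier algebra of `A`, `DoubleCentralizer.coe ℂ` the
canonical embedding `A → 𝓜(ℂ, A)`, `αM` the extension of `α` to `𝓜(ℂ, A)`,
and `ω` an `α`-cocycle of unitaries implementing the exterior equivalence. -/
theorem stmt10 {G A : Type*} [Group G] [Fintype G] [NonUnitalCStarAlgebra A]
    (α : G → (A ≃⋆ₐ[ℂ] A)) (hα : ∀ g h a, α (g * h) a = α g (α h a))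
    (β : G → (A ≃⋆ₐ[ℂ] A)) (hβ : ∀ g h a, β (g * h) a = β g (β h a))
    (αM : G → (𝓜(ℂ, A) ≃⋆ₐ[ℂ] 𝓜(ℂ, A)))
    (hαM : ∀ (g : G) (a : A),
      αM g (DoubleCentralizer.coe ℂ a) = DoubleCentralizer.coe ℂ (α g a))
    (ω : G → 𝓜(ℂ, A))
    (hunitary : ∀ g, star (ω g) * ω g = 1 ∧ ω g * star (ω g) = 1)
    (hcocycle : ∀ g h, ω (g * h) = ω g * αM g (ω h))
    (hext : ∀ (g : G) (a : A),
      DoubleCentralizer.coe ℂ (β g a)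
        = ω g * DoubleCentralizer.coe ℂ (α g a) * star (ω g))
    (hRokhlin : RokhlinProperty α) :
    RokhlinProperty β :=
  stmt10_general α β hβ ω hunitary hext hRokhlin
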